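/- Let n ≥ 4 and k ≥ 2 be integers, fix indices i ≠ j in {1,…,k} and u, v ∈ {1,…,n}, and let z = z_{ij}^{uv} ∈ ℝ^{2k} be the associated constraint direction. Then for every tuple (u_1,…,u_k) ∈ {1,…,2n}^k such that NOT (u_i ≡ u (mod n) and u_j ≡ v (mod n)), one has |⟨l(u_1,…,u_k), z⟩| > μ/√k, where μ = 1/(9n² + 36n⁴ + 2). -/

import Mathlib

open scoped RealInnerProductSpace
open Real

/-- The candidate stabbing direction `l(u_1,…,u_k) ∈ ℝ^{2k}`: its `m`-th planar projection
is `(1/√k)·(cos((2u_m−1)π/(2n)), sin((2u_m−1)π/(2n)))`. -/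
noncomputable def stabDir (k n : ℕ) (U : Fin k → ℕ) : EuclideanSpace ℝ (Fin (2 * k)) :=
  (WithLp.equiv 2 (Fin (2 * k) → ℝ)).symm fun idx =>
    let m : Fin k := ⟨(idx : ℕ) / 2, by have := idx.2; omega⟩
    let θ : ℝ := (2 * (U m : ℝ) - 1) * Real.pi / (2 * n)
    (1 / Real.sqrt k) * (if (idx : ℕ) % 2 = 0 then Real.cos θ else Real.sin θ)

/-- The constraint direction `z_{ij}^{uv} ∈ ℝ^{2k}`, with
`θ_i = (2u−1)π/(2n)`, `θ_j = (2v−1)π/(2n)`, `μ = 1/(9n² + 36n⁴ + 2)`: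
its `i`-th planar projection is `μ·(cos θ_i − 3n sin θ_i, sin θ_i + 3n cos θ_i)`,
its `j`-th planar projection is `μ·(−cos θ_j − 6n² sin θ_j, −sin θ_j + 6n² cos θ_j)`,
and its other coordinates are `0`. -/
noncomputable def constraintDir (k n : ℕ) (i j : Fin k) (u v : ℕ) :
    EuclideanSpace ℝ (Fin (2 * k)) :=
  (WithLp.equiv 2 (Fin (2 * k) → ℝ)).symm fun idx =>
    let μ : ℝ := 1 / (9 * (n : ℝ) ^ 2 + 36 * (n : ℝ) ^ 4 + 2)
    let θi : ℝ := (2 * (u : ℝ) - 1) * Real.pi / (2 * n)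
    let θj : ℝ := (2 * (v : ℝ) - 1) * Real.pi / (2 * n)
    if (idx : ℕ) = 2 * (i : ℕ) then μ * (Real.cos θi - 3 * n * Real.sin θi)
    else if (idx : ℕ) = 2 * (i : ℕ) + 1 then μ * (Real.sin θi + 3 * n * Real.cos θi)
    else if (idx : ℕ) = 2 * (j : ℕ) then μ * (-Real.cos θj - 6 * (n : ℝ) ^ 2 * Real.sin θj)
    else if (idx : ℕ) = 2 * (j : ℕ) + 1 then μ * (-Real.sin θj + 6 * (n : ℝ) ^ 2 * Real.cos θj)
    else 0

/-! Only the `i`-th and `j`-th planar blocks of `z` are nonzero, and pairing them with the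
corresponding blocks of `l` gives `⟪l, z⟫ = μ/√k · (cos A + 3n sin A - cos B + 6n² sin B)` with
`A = (u_i - u)π/n`, `B = (u_j - v)π/n`. By Jordan's inequality `|sin (rπ/n)| ≥ 2/n` unless `n ∣ r`.
If `n ∤ u_j - v`, the term `6n² sin B` has size at least `12n` and swamps the rest, which is at
most `3n + 2`. Otherwise `sin B = 0` and `n ∤ u_i - u`, so `3n sin A` has size at least `6` and
swamps `cos A - cos B`. Either way the bracket exceeds `1` in absolute value. -/

def planarIdx {k : ℕ} (m : Fin k) (b : Fin 2) : Fin (2 * k) := ⟨2 * m + b, by omega⟩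

lemma planarIdx_div_two {k : ℕ} (m : Fin k) (b : Fin 2) : (planarIdx m b : ℕ) / 2 = m := by
  simp only [planarIdx]; omega

lemma planarIdx_mod_two {k : ℕ} (m : Fin k) (b : Fin 2) : (planarIdx m b : ℕ) % 2 = b := by
  simp only [planarIdx]; omega

lemma inner_eq_sum_planarIdx {k : ℕ} (x y : EuclideanSpace ℝ (Fin (2 * k))) :
    ⟪x, y⟫ = ∑ m : Fin k, ∑ b : Fin 2, x (planarIdx m b) * y (planarIdx m b) := by
  let e : Fin k × Fin 2 ≃ Fin (2 * k) := finProdFinEquiv.trans (finCongr (mul_comm k 2))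
  have he (p : Fin k × Fin 2) : e p = planarIdx p.1 p.2 := by
    ext
    simp only [e, Equiv.trans_apply, finCongr_apply, Fin.val_cast, finProdFinEquiv_apply_val,
      planarIdx]
    ring
  rw [PiLp.inner_apply, ← e.sum_comp, Fintype.sum_prod_type]
  simp only [he, RCLike.inner_apply', conj_trivial]

noncomputable def oddAngle (n u : ℕ) : ℝ := (2 * (u : ℝ) - 1) * π / (2 * n)

lemma oddAngle_sub_oddAngle (n u v : ℕ) :
    oddAngle n u - oddAngle n v = ((u - v : ℤ) : ℝ) * π / n := by
  simp only [oddAngle]; push_cast; ring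

section Evaluation

variable {k : ℕ} (n : ℕ)

lemma stabDir_planarIdx_zero (U : Fin k → ℕ) (m : Fin k) :
    stabDir k n U (planarIdx m 0) = 1 / √k * cos (oddAngle n (U m)) := by
  simp [stabDir, oddAngle, planarIdx_div_two, planarIdx_mod_two]

lemma stabDir_planarIdx_one (U : Fin k → ℕ) (m : Fin k) :
    stabDir k n U (planarIdx m 1) = 1 / √k * sin (oddAngle n (U m)) := by
  simp [stabDir, oddAngle, planarIdx_div_two, planarIdx_mod_two]

variable {i j : Fin k} (u v : ℕ)

lemma constraintDir_planarIdx_of_ne {m : Fin k} (hi : m ≠ i) (hj : m ≠ j) (b : Fin 2) :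
    constraintDir k n i j u v (planarIdx m b) = 0 := by
  have := Fin.val_ne_of_ne hi
  have := Fin.val_ne_of_ne hj
  have := b.isLt
  simp only [constraintDir, planarIdx, WithLp.equiv_symm_apply, WithLp.ofLp_toLp]
  split_ifs <;> first | rfl | omega

lemma constraintDir_planarIdx_left_zero :
    constraintDir k n i j u v (planarIdx i 0) = 1 / (9 * (n : ℝ) ^ 2 + 36 * (n : ℝ) ^ 4 + 2) *
      (cos (oddAngle n u) - 3 * n * sin (oddAngle n u)) := by
  simp [constraintDir, planarIdx, oddAngle]

lemma constraintDir_planarIdx_left_one :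
    constraintDir k n i j u v (planarIdx i 1) = 1 / (9 * (n : ℝ) ^ 2 + 36 * (n : ℝ) ^ 4 + 2) *
      (sin (oddAngle n u) + 3 * n * cos (oddAngle n u)) := by
  simp [constraintDir, planarIdx, oddAngle]

lemma constraintDir_planarIdx_right_zero (hij : i ≠ j) :
    constraintDir k n i j u v (planarIdx j 0) = 1 / (9 * (n : ℝ) ^ 2 + 36 * (n : ℝ) ^ 4 + 2) *
      (-cos (oddAngle n v) - 6 * n ^ 2 * sin (oddAngle n v)) := by
  have := Fin.val_ne_of_ne hij
  simp only [constraintDir, planarIdx, oddAngle, WithLp.equiv_symm_apply, WithLp.ofLp_toLp,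
    Fin.val_zero]
  split_ifs <;> first | rfl | omega

lemma constraintDir_planarIdx_right_one (hij : i ≠ j) :
    constraintDir k n i j u v (planarIdx j 1) = 1 / (9 * (n : ℝ) ^ 2 + 36 * (n : ℝ) ^ 4 + 2) *
      (-sin (oddAngle n v) + 6 * n ^ 2 * cos (oddAngle n v)) := by
  have := Fin.val_ne_of_ne hij
  simp only [constraintDir, planarIdx, oddAngle, WithLp.equiv_symm_apply, WithLp.ofLp_toLp,
    Fin.val_one]
  split_ifs <;> first | rfl | omega

end Evaluation

noncomputable def constraintPairing (n A B : ℝ) : ℝ :=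
  cos A + 3 * n * sin A - cos B + 6 * n ^ 2 * sin B

lemma inner_stabDir_constraintDir {k n : ℕ} {i j : Fin k} (hij : i ≠ j) (u v : ℕ)
    (U : Fin k → ℕ) :
    ⟪stabDir k n U, constraintDir k n i j u v⟫ =
      1 / (9 * (n : ℝ) ^ 2 + 36 * (n : ℝ) ^ 4 + 2) / √k *
        constraintPairing n (oddAngle n (U i) - oddAngle n u)
          (oddAngle n (U j) - oddAngle n v) := by
  rw [inner_eq_sum_planarIdx, Fintype.sum_eq_add i j hij fun m hm => ?_]
  · simp only [Fin.sum_univ_two, stabDir_planarIdx_zero, stabDir_planarIdx_one,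
      constraintDir_planarIdx_left_zero, constraintDir_planarIdx_left_one,
      constraintDir_planarIdx_right_zero n u v hij, constraintDir_planarIdx_right_one n u v hij,
      constraintPairing, cos_sub, sin_sub]
    ring
  · simp [constraintDir_planarIdx_of_ne n u v hm.1 hm.2]

lemma two_div_pi_mul_min_le_sin {x : ℝ} (h0 : 0 ≤ x) (hπ : x ≤ π) :
    2 / π * min x (π - x) ≤ sin x := by
  rcases le_total x (π / 2) with h | h
  · exact (mul_le_mul_of_nonneg_left (min_le_left _ _) (by positivity)).trans (mul_le_sin h0 h)
  · rw [← sin_pi_sub]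
    exact (mul_le_mul_of_nonneg_left (min_le_right _ _) (by positivity)).trans
      (mul_le_sin (by linarith) (by linarith))

lemma two_div_le_abs_sin_int_mul_pi_div {n : ℕ} {a : ℤ} (ha : ¬ (n : ℤ) ∣ a) :
    2 / n ≤ |sin (a * π / n)| := by
  rcases n.eq_zero_or_pos with rfl | hn
  · simp
  have hnR : (0 : ℝ) < n := by exact_mod_cast hn
  have hr : 1 ≤ a % n ∧ a % n + 1 ≤ n := by
    have := Int.emod_nonneg a (by omega : (n : ℤ) ≠ 0)
    have := Int.emod_lt_of_pos a (by omega : (0 : ℤ) < n)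
    have : a % n ≠ 0 := fun h => ha (Int.dvd_of_emod_eq_zero h)
    omega
  have hsplit : a * π / n = (a % n : ℤ) * π / n + (a / n : ℤ) * π := by
    conv_lhs => rw [← Int.emod_add_ediv_mul a n]
    push_cast
    field_simp
  obtain ⟨hr1, hr2⟩ : (1 : ℝ) ≤ (a % n : ℤ) ∧ ((a % n : ℤ) : ℝ) + 1 ≤ n := by exact_mod_cast hr
  have hlo : π / n ≤ (a % n : ℤ) * π / n := by gcongr; nlinarith [pi_pos]
  have hπn : 0 < π / n := div_pos pi_pos hnR
  have hhi : (a % n : ℤ) * π / n ≤ π - π / n := by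
    rw [le_sub_iff_add_le, ← add_div, div_le_iff₀ hnR]; nlinarith [pi_pos]
  rw [hsplit, sin_add_int_mul_pi, abs_mul, abs_neg_one_zpow, one_mul]
  calc 2 / (n : ℝ) = 2 / π * (π / n) := by field_simp
    _ ≤ 2 / π * min ((a % n : ℤ) * π / n) (π - (a % n : ℤ) * π / n) := by
        gcongr; exact le_min hlo (by linarith)
    _ ≤ sin ((a % n : ℤ) * π / n) :=
        two_div_pi_mul_min_le_sin (by linarith) (by linarith)
    _ ≤ _ := le_abs_self _

lemma sin_int_mul_pi_div_eq_zero {n : ℕ} {a : ℤ} (ha : (n : ℤ) ∣ a) : sin (a * π / n) = 0 := by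
  obtain ⟨c, rfl⟩ := ha
  rcases eq_or_ne n 0 with rfl | hn
  · simp
  · rw [sin_eq_zero_iff]
    exact ⟨c, by push_cast; field_simp⟩

lemma one_lt_abs_constraintPairing_of_sin_eq_zero {n A B : ℝ} (hn : 0 < n) (hB : sin B = 0)
    (hA : 2 / n ≤ |sin A|) : 1 < |constraintPairing n A B| := by
  have h2 : 2 ≤ n * |sin A| := (div_le_iff₀' hn).1 hA
  have hcos : |cos A - cos B| ≤ 2 :=
    (abs_sub _ _).trans (by linarith [abs_cos_le_one A, abs_cos_le_one B])
  calc 1 < |3 * n * sin A| - |cos A - cos B| := by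
        rw [abs_mul, abs_of_pos (by positivity : 0 < 3 * n)]; linarith
    _ ≤ |3 * n * sin A + (cos A - cos B)| := abs_sub_abs_le_abs_add _ _
    _ = |constraintPairing n A B| := by rw [constraintPairing, hB]; congr 1; ring

lemma one_lt_abs_constraintPairing_of_two_div_le_abs_sin {n A B : ℝ} (hn : 0 < n)
    (hB : 2 / n ≤ |sin B|) : 1 < |constraintPairing n A B| := by
  have h2 : 2 ≤ n * |sin B| := (div_le_iff₀' hn).1 hB
  have hn2 : 2 ≤ n := by nlinarith [abs_sin_le_one B]
  have hrest : |cos A + 3 * n * sin A - cos B| ≤ 3 * n + 2 := by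
    have : |3 * n * sin A| ≤ 3 * n := by
      rw [abs_mul, abs_of_pos (by positivity : 0 < 3 * n)]
      nlinarith [abs_sin_le_one A]
    have := abs_add_le (cos A) (3 * n * sin A)
    have := abs_sub (cos A + 3 * n * sin A) (cos B)
    linarith [abs_cos_le_one A, abs_cos_le_one B]
  calc 1 < |6 * n ^ 2 * sin B| - |cos A + 3 * n * sin A - cos B| := by
        rw [abs_mul, abs_of_pos (by positivity : 0 < 6 * n ^ 2)]; nlinarith
    _ ≤ |6 * n ^ 2 * sin B + (cos A + 3 * n * sin A - cos B)| := abs_sub_abs_le_abs_add _ _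
    _ = |constraintPairing n A B| := by rw [constraintPairing]; congr 1; ring

lemma one_lt_abs_constraintPairing {n : ℕ} (hn : 0 < n) {a b : ℤ}
    (hab : ¬ ((n : ℤ) ∣ a ∧ (n : ℤ) ∣ b)) :
    1 < |constraintPairing n (a * π / n) (b * π / n)| := by
  have hnR : (0 : ℝ) < n := by exact_mod_cast hn
  by_cases hb : (n : ℤ) ∣ b
  · exact one_lt_abs_constraintPairing_of_sin_eq_zero hnR (sin_int_mul_pi_div_eq_zero hb)
      (two_div_le_abs_sin_int_mul_pi_div fun ha => hab ⟨ha, hb⟩)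
  · exact one_lt_abs_constraintPairing_of_two_div_le_abs_sin hnR
      (two_div_le_abs_sin_int_mul_pi_div hb)

theorem constraintDir_inner_lower_bound_general (k n : ℕ) (hn : 4 ≤ n)
    (i j : Fin k) (hij : i ≠ j) (u v : ℕ)
    (U : Fin k → ℕ)
    (hmod : ¬(U i ≡ u [MOD n] ∧ U j ≡ v [MOD n])) :
    |⟪stabDir k n U, constraintDir k n i j u v⟫| >
      (1 / (9 * (n : ℝ) ^ 2 + 36 * (n : ℝ) ^ 4 + 2)) / Real.sqrt k := by
  have hscale : 0 < 1 / (9 * (n : ℝ) ^ 2 + 36 * (n : ℝ) ^ 4 + 2) / √k :=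
    div_pos (by positivity) (sqrt_pos.2 (by exact_mod_cast i.pos))
  rw [inner_stabDir_constraintDir hij, abs_mul, abs_of_pos hscale, oddAngle_sub_oddAngle,
    oddAngle_sub_oddAngle, gt_iff_lt]
  refine lt_mul_of_one_lt_right hscale (one_lt_abs_constraintPairing (by omega) ?_)
  simpa only [Nat.modEq_iff_dvd, dvd_sub_comm] using hmod

/-- For every direction `l(u_1,…,u_k)` such that it is not the case that both
`u_i ≡ u (mod n)` and `u_j ≡ v (mod n)`, the inner product with the constraint direction
`z_{ij}^{uv}` is larger than `μ/√k` in absolute value, where `μ = 1/(9n² + 36n⁴ + 2)`. -/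
theorem constraintDir_inner_lower_bound (k n : ℕ) (hn : 4 ≤ n) (hk : 2 ≤ k)
    (i j : Fin k) (hij : i ≠ j) (u v : ℕ)
    (hu : u ∈ Finset.Icc 1 n) (hv : v ∈ Finset.Icc 1 n)
    (U : Fin k → ℕ) (hU : ∀ m, U m ∈ Finset.Icc 1 (2 * n))
    (hmod : ¬(U i ≡ u [MOD n] ∧ U j ≡ v [MOD n])) :
    |⟪stabDir k n U, constraintDir k n i j u v⟫| >
      (1 / (9 * (n : ℝ) ^ 2 + 36 * (n : ℝ) ^ 4 + 2)) / Real.sqrt k :=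
  constraintDir_inner_lower_bound_general k n hn i j hij u v U hmod
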